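/- For p ∈ [0,1] and symmetric PSD P (n×n), PD R (m×m), the Riccati-type map g_ρ(P) = A^T P A + Q − ρ (B^T P A)^T (B^T P B + R)^{-1} (B^T P A) with ρ = p(1−p) maps symmetric PSD matrices to symmetric PSD matrices (given Q symmetric PSD). -/

import Mathlib

open Matrix

/-! The correction term `K = (BᵀPA)ᵀ (BᵀPB + R)⁻¹ (BᵀPA)` is PSD, and `AᵀPA - K` is the Schur
complement of the block `BᵀPB + R` in the PSD matrix `[A B]ᵀ P [A B] + diag(0, R)`, hence PSD
too. Since `ρ = p(1-p) ≤ 1/4`, the map `g_ρ(P) = (AᵀPA - K) + Q + (1 - ρ) K` is a sum of PSD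
matrices. -/

namespace Matrix

theorem conjTranspose_fromCols_mul_mul_fromCols {ι m n α : Type*} [Fintype ι] [Semiring α]
    [Star α] (P : Matrix ι ι α) (A : Matrix ι m α) (B : Matrix ι n α) :
    (fromCols A B)ᴴ * P * fromCols A B =
      fromBlocks (Aᴴ * P * A) (Aᴴ * P * B) (Bᴴ * P * A) (Bᴴ * P * B) := by
  rw [conjTranspose_fromCols_eq_fromRows_conjTranspose, fromRows_mul, fromRows_mul_fromCols]

theorem PosSemidef.fromBlocks_zero_zero_zero {m n α : Type*} [Fintype m] [Fintype n]
    [DecidableEq n] [Ring α] [PartialOrder α] [StarRing α] {R : Matrix n n α}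
    (hR : R.PosSemidef) :
    (fromBlocks (0 : Matrix m m α) 0 0 R).PosSemidef := by
  have h := hR.conjTranspose_mul_mul_same (fromCols (0 : Matrix n m α) (1 : Matrix n n α))
  simpa only [conjTranspose_fromCols_mul_mul_fromCols, conjTranspose_zero, conjTranspose_one,
    Matrix.zero_mul, Matrix.mul_zero, Matrix.one_mul, Matrix.mul_one] using h

variable {ι m n K : Type*} [Fintype ι] [Fintype m] [Fintype n] [DecidableEq n]
  [Field K] [PartialOrder K] [StarRing K] [StarOrderedRing K]

noncomputable def riccatiCorrection (P : Matrix ι ι K) (A : Matrix ι m K) (B : Matrix ι n K)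
    (R : Matrix n n K) : Matrix m m K :=
  (Bᴴ * P * A)ᴴ * (Bᴴ * P * B + R)⁻¹ * (Bᴴ * P * A)

omit [Fintype m] [DecidableEq n] in
theorem PosSemidef.conjTranspose_mul_mul_add_posDef {P : Matrix ι ι K} {R : Matrix n n K}
    (hP : P.PosSemidef) (hR : R.PosDef) (B : Matrix ι n K) : (Bᴴ * P * B + R).PosDef :=
  PosDef.posSemidef_add (hP.conjTranspose_mul_mul_same B) hR

theorem posSemidef_riccatiCorrection {P : Matrix ι ι K} {R : Matrix n n K}
    (hP : P.PosSemidef) (hR : R.PosDef) (A : Matrix ι m K) (B : Matrix ι n K) :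
    (riccatiCorrection P A B R).PosSemidef :=
  (hP.conjTranspose_mul_mul_add_posDef hR B).inv.posSemidef.conjTranspose_mul_mul_same _

theorem PosSemidef.fromBlocks_gram_add {P : Matrix ι ι K} {R : Matrix n n K}
    (hP : P.PosSemidef) (hR : R.PosSemidef) (A : Matrix ι m K) (B : Matrix ι n K) :
    (fromBlocks (Aᴴ * P * A) (Aᴴ * P * B) (Bᴴ * P * A) (Bᴴ * P * B + R)).PosSemidef := by
  have hsum := PosSemidef.add (hP.conjTranspose_mul_mul_same (fromCols A B))
    (hR.fromBlocks_zero_zero_zero (m := m))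
  rwa [conjTranspose_fromCols_mul_mul_fromCols, fromBlocks_add, add_zero, add_zero,
    add_zero] at hsum

theorem PosSemidef.sub_riccatiCorrection {P : Matrix ι ι K} {R : Matrix n n K}
    (hP : P.PosSemidef) (hR : R.PosDef) (A : Matrix ι m K) (B : Matrix ι n K) :
    (Aᴴ * P * A - riccatiCorrection P A B R).PosSemidef := by
  have hS := hP.conjTranspose_mul_mul_add_posDef hR B
  have : Invertible (Bᴴ * P * B + R) := hS.isUnit.invertible
  have hadj : (Aᴴ * P * B)ᴴ = Bᴴ * P * A := by
    simp only [conjTranspose_mul, conjTranspose_conjTranspose, hP.1.eq, Matrix.mul_assoc]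
  rw [riccatiCorrection, ← hadj, conjTranspose_conjTranspose, ← PosDef.fromBlocks₂₂ _ _ hS, hadj]
  exact hP.fromBlocks_gram_add hR.posSemidef A B

end Matrix

theorem riccati_map_psd_general {n m : ℕ}
    (Q A P : Matrix (Fin n) (Fin n) ℝ) (R : Matrix (Fin m) (Fin m) ℝ)
    (B : Matrix (Fin n) (Fin m) ℝ)
    (hQ : Q.PosSemidef) (hR : R.PosDef) (hP : P.PosSemidef)
    (p ρ : ℝ) (hρ : ρ = p * (1 - p)) :
    (Aᵀ * P * A + Q -
      ρ • ((Bᵀ * P * A)ᵀ * (Bᵀ * P * B + R)⁻¹ * (Bᵀ * P * A))).PosSemidef := by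
  simp only [← conjTranspose_eq_transpose_of_trivial]
  change (Aᴴ * P * A + Q - ρ • riccatiCorrection P A B R).PosSemidef
  have hρ_le : ρ ≤ 1 := by nlinarith [sq_nonneg (p - 1 / 2)]
  set K := riccatiCorrection P A B R
  have hsplit : Aᴴ * P * A + Q - ρ • K = (Aᴴ * P * A - K) + Q + (1 - ρ) • K := by module
  rw [hsplit]
  exact ((hP.sub_riccatiCorrection hR A B).add hQ).add
    ((posSemidef_riccatiCorrection hP hR A B).smul (sub_nonneg.mpr hρ_le))

/-- The Riccati-type map `g_ρ(P) = AᵀPA + Q - ρ (BᵀPA)ᵀ (BᵀPB + R)⁻¹ (BᵀPA)`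
with `ρ = p(1-p)`, `p ∈ [0,1]`, maps symmetric PSD matrices to symmetric PSD
matrices (given `Q` symmetric PSD, `R` symmetric PD). -/
theorem riccati_map_psd {n m : ℕ}
    (Q A P : Matrix (Fin n) (Fin n) ℝ) (R : Matrix (Fin m) (Fin m) ℝ)
    (B : Matrix (Fin n) (Fin m) ℝ)
    (hQ : Q.PosSemidef) (hR : R.PosDef) (hP : P.PosSemidef)
    (p ρ : ℝ) (hp : p ∈ Set.Icc (0:ℝ) 1) (hρ : ρ = p * (1 - p)) :
    (Aᵀ * P * A + Q -
      ρ • ((Bᵀ * P * A)ᵀ * (Bᵀ * P * B + R)⁻¹ * (Bᵀ * P * A))).PosSemidef :=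
  riccati_map_psd_general Q A P R B hQ hR hP p ρ hρ
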